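/- For k = 8 the maximum of nfc(F) over all minimally unsatisfiable clause-sets F with deficiency δ(F) = 8 equals 10, and for k = 10 the maximum of nfc(F) over all minimally unsatisfiable clause-sets F with δ(F) = 10 equals 12; in both cases the maximum is already attained by unsatisfiable hitting clause-sets. -/

import Mathlib

/-- A clause: a finite set of nonzero integers (literals) that is clash-free. -/
def IsClause (C : Finset ℤ) : Prop := (0 : ℤ) ∉ C ∧ ∀ x ∈ C, -x ∉ C

/-- A clause-set: a finite set of clauses. -/
def IsClauseSet (F : Finset (Finset ℤ)) : Prop := ∀ C ∈ F, IsClause C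

/-- The variables of a clause: the absolute values of its literals. -/
def clauseVar (C : Finset ℤ) : Finset ℕ := C.image Int.natAbs

/-- The variables of a clause-set. -/
def var (F : Finset (Finset ℤ)) : Finset ℕ := F.biUnion clauseVar

/-- The number of variables `n(F)`. -/
def numVar (F : Finset (Finset ℤ)) : ℕ := (var F).card

/-- The deficiency `δ(F) = c(F) - n(F)`. -/
def deficiency (F : Finset (Finset ℤ)) : ℤ := (F.card : ℤ) - (numVar F : ℤ)

/-- `F` is satisfiable iff some clause `C` intersects every clause of `F`. -/
def Satisfiable (F : Finset (Finset ℤ)) : Prop :=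
  ∃ C : Finset ℤ, IsClause C ∧ ∀ D ∈ F, (C ∩ D).Nonempty

/-- `F` is hitting iff any two distinct clauses of `F` clash. -/
def Hitting (F : Finset (Finset ℤ)) : Prop :=
  ∀ C ∈ F, ∀ D ∈ F, C ≠ D → ∃ x ∈ C, -x ∈ D

/-- `F` is minimally unsatisfiable. -/
def MinUnsat (F : Finset (Finset ℤ)) : Prop :=
  ¬ Satisfiable F ∧ ∀ G ⊂ F, Satisfiable G

/-- The number of full clauses of `F`. -/
def nfc (F : Finset (Finset ℤ)) : ℕ :=
  (F.filter (fun C => clauseVar C = var F)).card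

/-- The degree of a variable `v` in `F`. -/
def vdeg (F : Finset (Finset ℤ)) (v : ℕ) : ℕ :=
  (F.filter (fun C => v ∈ clauseVar C)).card

/-- The minimal variable-degree of `F` (for `n(F) > 0`). -/
noncomputable def minVarDeg (F : Finset (Finset ℤ)) : ℕ :=
  sInf {d : ℕ | ∃ v ∈ var F, vdeg F v = d}

/-!
Let `F` be minimally unsatisfiable with `n` variables, `f` full and `m` non-full clauses. Over
`var F`, the models of the non-full clauses are exactly the `f` assignments falsifying a single
full clause, since minimal unsatisfiability gives every full clause a model of the other clauses.
Splitting on variables shows that `N` models of a satisfiable set of `m` clauses over `n`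
variables satisfy `N * 2^m ≥ 2^(n+1)` or `N * 2^m = 2^(n+1) - 2^j` with `m ≤ j ≤ n`. As
`n + 1 - m = f - k + 1` for deficiency `k`, this excludes `f ≥ k + 3` when `k ∈ {8, 10}`.
-/

open Finset

/-- An assignment is the finite set `S` of variables set to true. -/
def LitTrue (S : Finset ℕ) (x : ℤ) : Prop := (0 < x ↔ x.natAbs ∈ S)

instance (S : Finset ℕ) (x : ℤ) : Decidable (LitTrue S x) := inferInstanceAs (Decidable (_ ↔ _))

def ClauseTrue (S : Finset ℕ) (C : Finset ℤ) : Prop := ∃ x ∈ C, LitTrue S x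

instance (S : Finset ℕ) (C : Finset ℤ) : Decidable (ClauseTrue S C) :=
  inferInstanceAs (Decidable (∃ x ∈ C, _))

def models (V : Finset ℕ) (G : Finset (Finset ℤ)) : Finset (Finset ℕ) :=
  V.powerset.filter (fun S => ∀ C ∈ G, ClauseTrue S C)

lemma mem_models {V S : Finset ℕ} {G : Finset (Finset ℤ)} :
    S ∈ models V G ↔ S ⊆ V ∧ ∀ C ∈ G, ClauseTrue S C := by
  rw [models, mem_filter, mem_powerset]

lemma litTrue_neg {S : Finset ℕ} {x : ℤ} (hx : x ≠ 0) : LitTrue S (-x) ↔ ¬ LitTrue S x := by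
  unfold LitTrue
  rw [Int.natAbs_neg]
  by_cases h : x.natAbs ∈ S <;> simp only [h, iff_true, iff_false] <;> omega

lemma litTrue_congr {S T : Finset ℕ} {x : ℤ} (h : x.natAbs ∈ S ↔ x.natAbs ∈ T) :
    LitTrue S x ↔ LitTrue T x := by
  unfold LitTrue; rw [h]

lemma natAbs_ne_of_ne_of_ne {x l : ℤ} (h₁ : x ≠ l) (h₂ : x ≠ -l) : x.natAbs ≠ l.natAbs := by
  intro h; rcases Int.natAbs_eq_natAbs_iff.mp h with h | h <;> contradiction

def setTrue (S : Finset ℕ) (l : ℤ) : Finset ℕ :=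
  if 0 < l then insert l.natAbs S else S.erase l.natAbs

lemma litTrue_setTrue (S : Finset ℕ) (l : ℤ) : LitTrue (setTrue S l) l := by
  unfold LitTrue setTrue; split_ifs with h <;> simp [h]

lemma litTrue_setTrue_iff {S : Finset ℕ} {l x : ℤ} (h : x.natAbs ≠ l.natAbs) :
    LitTrue (setTrue S l) x ↔ LitTrue S x := by
  apply litTrue_congr; unfold setTrue; split_ifs <;> simp [h]

lemma erase_setTrue (S : Finset ℕ) (l : ℤ) : (setTrue S l).erase l.natAbs = S.erase l.natAbs := by
  unfold setTrue; split_ifs <;> simp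

lemma setTrue_eq_self {S : Finset ℕ} {l : ℤ} (h : LitTrue S l) : setTrue S l = S := by
  unfold LitTrue at h; unfold setTrue; split_ifs with hl
  · exact insert_eq_of_mem (h.mp hl)
  · exact erase_eq_of_notMem (mt h.mpr hl)

lemma setTrue_erase {S : Finset ℕ} {l : ℤ} : setTrue (S.erase l.natAbs) l = setTrue S l := by
  unfold setTrue; split_ifs
  · ext w; by_cases hw : w = l.natAbs <;> simp [hw]
  · exact erase_idem

lemma setTrue_subset {S V : Finset ℕ} {l : ℤ} (hS : S ⊆ V) (hl : l.natAbs ∈ V) :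
    setTrue S l ⊆ V := by
  unfold setTrue; split_ifs
  · exact insert_subset hl hS
  · exact (erase_subset _ _).trans hS

def restrictLit (G : Finset (Finset ℤ)) (l : ℤ) : Finset (Finset ℤ) :=
  (G.filter (fun C => l ∉ C)).image (fun C => C.erase (-l))

lemma card_restrictLit_le (G : Finset (Finset ℤ)) (l : ℤ) : #(restrictLit G l) ≤ #G :=
  card_image_le.trans (card_filter_le _ _)

lemma card_restrictLit_lt {G : Finset (Finset ℤ)} {l : ℤ} {C : Finset ℤ} (hC : C ∈ G)
    (hl : l ∈ C) : #(restrictLit G l) < #G :=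
  card_image_le.trans_lt (card_lt_card (filter_ssubset.mpr ⟨C, hC, not_not.mpr hl⟩))

lemma restrictLit_eq_self {G : Finset (Finset ℤ)} {l : ℤ}
    (h : ∀ C ∈ G, ∀ x ∈ C, x.natAbs ≠ l.natAbs) : restrictLit G l = G := by
  have hl : ∀ C ∈ G, l ∉ C := fun C hC hlC => h C hC l hlC rfl
  have hnl : ∀ C ∈ G, -l ∉ C := fun C hC hlC => h C hC (-l) hlC (Int.natAbs_neg l)
  rw [restrictLit, filter_true_of_mem hl, image_congr (g := id), image_id]
  exact fun C hC => erase_eq_of_notMem (hnl C hC)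

lemma clauseTrue_iff_restrictLit {S : Finset ℕ} {l : ℤ} {C : Finset ℤ} (hl0 : l ≠ 0)
    (hl : LitTrue S l) (hlC : l ∉ C) :
    ClauseTrue S C ↔ ClauseTrue (S.erase l.natAbs) (C.erase (-l)) := by
  have hfalse : ¬ LitTrue S (-l) := (litTrue_neg hl0).not.mpr (not_not.mpr hl)
  constructor
  · rintro ⟨x, hxC, hx⟩
    have hxl : x ≠ -l := by rintro rfl; exact hfalse hx
    have hv : x.natAbs ≠ l.natAbs := natAbs_ne_of_ne_of_ne (by rintro rfl; exact hlC hxC) hxl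
    exact ⟨x, mem_erase.mpr ⟨hxl, hxC⟩, (litTrue_congr (by simp [hv])).mpr hx⟩
  · rintro ⟨x, hxC', hx⟩
    obtain ⟨hxl, hxC⟩ := mem_erase.mp hxC'
    have hv : x.natAbs ≠ l.natAbs := natAbs_ne_of_ne_of_ne (by rintro rfl; exact hlC hxC) hxl
    exact ⟨x, hxC, (litTrue_congr (by simp [hv])).mp hx⟩

lemma forall_clauseTrue_iff_restrictLit {S : Finset ℕ} {l : ℤ} {G : Finset (Finset ℤ)}
    (hl0 : l ≠ 0) (hl : LitTrue S l) :
    (∀ C ∈ G, ClauseTrue S C) ↔ ∀ C ∈ restrictLit G l, ClauseTrue (S.erase l.natAbs) C := by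
  simp only [restrictLit, forall_mem_image, mem_filter, and_imp]
  constructor
  · exact fun h C hC hlC => (clauseTrue_iff_restrictLit hl0 hl hlC).mp (h C hC)
  · intro h C hC
    by_cases hlC : l ∈ C
    · exact ⟨l, hlC, hl⟩
    · exact (clauseTrue_iff_restrictLit hl0 hl hlC).mpr (h hC hlC)

lemma card_models_filter_litTrue {V : Finset ℕ} {G : Finset (Finset ℤ)} {l : ℤ} (hl0 : l ≠ 0)
    (hlV : l.natAbs ∈ V) :
    #((models V G).filter (fun S => LitTrue S l))
      = #(models (V.erase l.natAbs) (restrictLit G l)) := by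
  apply card_bij' (fun S _ => S.erase l.natAbs) (fun S _ => setTrue S l)
  · intro S hS
    simp only [mem_filter, mem_models] at hS
    obtain ⟨⟨hSV, hsat⟩, hl⟩ := hS
    exact mem_models.mpr ⟨erase_subset_erase _ hSV,
      (forall_clauseTrue_iff_restrictLit hl0 hl).mp hsat⟩
  · intro S hS
    obtain ⟨hSV, hsat⟩ := mem_models.mp hS
    have hvS : l.natAbs ∉ S := fun h => by simpa using hSV h
    simp only [mem_filter, mem_models]
    refine ⟨⟨setTrue_subset (hSV.trans (erase_subset _ _)) hlV, ?_⟩, litTrue_setTrue S l⟩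
    rw [forall_clauseTrue_iff_restrictLit hl0 (litTrue_setTrue S l), erase_setTrue,
      erase_eq_of_notMem hvS]
    exact hsat
  · intro S hS
    simp only [setTrue_erase, setTrue_eq_self (mem_filter.mp hS).2]
  · intro S hS
    have hvS : l.natAbs ∉ S := fun h => by simpa using (mem_models.mp hS).1 h
    simp only [erase_setTrue, erase_eq_of_notMem hvS]

lemma card_models_eq_add {V : Finset ℕ} {G : Finset (Finset ℤ)} {l : ℤ} (hl0 : l ≠ 0)
    (hlV : l.natAbs ∈ V) :
    #(models V G) = #(models (V.erase l.natAbs) (restrictLit G l))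
      + #(models (V.erase l.natAbs) (restrictLit G (-l))) := by
  rw [← card_models_filter_litTrue hl0 hlV, ← Int.natAbs_neg l,
    ← card_models_filter_litTrue (neg_ne_zero.mpr hl0) (by rwa [Int.natAbs_neg]),
    ← card_filter_add_card_filter_not (fun S => LitTrue S l)]
  congr 2
  exact filter_congr fun S _ => (litTrue_neg hl0).symm

/-- For `m ≤ n` this says `N ≥ 2^(n+1-m)` or `N = 2^(n+1-m) - 2^(j-m)` with `m ≤ j ≤ n`;
in particular `N ≥ 2^(n-m)`, the classical bound for a satisfiable set of `m` clauses. -/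
def ModelCountBound (N m n : ℕ) : Prop :=
  2 ^ (n + 1) ≤ N * 2 ^ m ∨ ∃ j, m ≤ j ∧ j ≤ n ∧ N * 2 ^ m + 2 ^ j = 2 ^ (n + 1)

lemma mul_two_pow_le_mul_two_pow (N : ℕ) {k d m : ℕ} (h : k + d ≤ m) :
    N * 2 ^ k * 2 ^ d ≤ N * 2 ^ m := by
  rw [mul_assoc, ← pow_add]
  exact Nat.mul_le_mul_left _ (Nat.pow_le_pow_right two_pos h)

lemma two_mul_le_mul_two_pow (N : ℕ) {k m : ℕ} (h : k < m) : 2 * (N * 2 ^ k) ≤ N * 2 ^ m := by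
  simpa [mul_comm 2] using mul_two_pow_le_mul_two_pow N (d := 1) h

lemma four_mul_le_mul_two_pow (N : ℕ) {k m : ℕ} (h : k + 2 ≤ m) :
    4 * (N * 2 ^ k) ≤ N * 2 ^ m := by
  simpa [mul_comm 4] using mul_two_pow_le_mul_two_pow N h

namespace ModelCountBound

variable {N N₁ N₂ k m n : ℕ}

lemma one (m : ℕ) : ModelCountBound 1 m 0 := by
  rcases Nat.eq_zero_or_pos m with rfl | hm
  · exact Or.inr ⟨0, le_rfl, le_rfl, rfl⟩
  · exact Or.inl (by simpa using Nat.pow_le_pow_right two_pos hm)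

lemma two_pow_le (h : ModelCountBound N m n) : 2 ^ n ≤ N * 2 ^ m := by
  have h2 : 2 ^ (n + 1) = 2 * 2 ^ n := by ring
  rcases h with h | ⟨j, -, hjn, h⟩
  · omega
  · have := Nat.pow_le_pow_right two_pos hjn
    omega

lemma mono (h : ModelCountBound N k n) (hkm : k ≤ m) : ModelCountBound N m n := by
  rcases hkm.eq_or_lt with rfl | hkm
  · exact h
  · have := two_mul_le_mul_two_pow N hkm
    have := h.two_pow_le
    left; rw [pow_succ]; omega

lemma succ_of_lt (h : ModelCountBound N k n) (hkm : k < m) : ModelCountBound N m (n + 1) := by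
  have hlow := h.two_pow_le
  rcases Nat.lt_or_ge (k + 1) m with hkm' | hkm'
  · have := four_mul_le_mul_two_pow N hkm'
    left; rw [pow_succ, pow_succ]; omega
  · obtain rfl : m = k + 1 := by omega
    rw [ModelCountBound, pow_succ 2 k, ← mul_assoc]
    rcases h with h | ⟨j, hkj, hjn, h⟩
    · left; rw [pow_succ]; omega
    · right; exact ⟨j + 1, by omega, by omega, by rw [pow_succ, pow_succ]; omega⟩

lemma add (h₁ : ModelCountBound N₁ m (n + 1)) (h₂ : N₂ = 0 ∨ ModelCountBound N₂ m n) :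
    ModelCountBound (N₁ + N₂) m (n + 1) := by
  rw [ModelCountBound, add_mul]
  rcases h₂ with rfl | h₂
  · simpa [ModelCountBound] using h₁
  have hlow := h₂.two_pow_le
  have h2 : 2 ^ (n + 1 + 1) = 2 * 2 ^ (n + 1) := by ring
  have h2' : 2 ^ (n + 1) = 2 * 2 ^ n := by ring
  rcases h₁ with h₁ | ⟨i, hmi, hin, h₁⟩
  · left; omega
  rcases hin.eq_or_lt with rfl | hin
  · rcases h₂ with h₂ | ⟨j, hmj, hjn, h₂⟩
    · left; omega
    · right; exact ⟨j, hmj, by omega, by omega⟩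
  · have := Nat.pow_le_pow_right two_pos (Nat.le_of_lt_succ hin)
    left; omega

lemma double (h : ModelCountBound N m n) : ModelCountBound (N + N) m (n + 1) := by
  have h2 : ∀ e, 2 ^ (e + 1) = 2 * 2 ^ e := fun e => by ring
  rcases h with h | ⟨j, hmj, hjn, h⟩
  · left; rw [h2, add_mul]; omega
  · right; exact ⟨j + 1, by omega, by omega, by rw [h2, h2 (n + 1), add_mul]; omega⟩

lemma step (h₁ : ModelCountBound N₁ k n) (hk : k < m)
    (h₂ : N₂ = 0 ∨ ∃ k', k' ≤ m ∧ ModelCountBound N₂ k' n) :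
    ModelCountBound (N₁ + N₂) m (n + 1) :=
  (h₁.succ_of_lt hk).add (h₂.imp_right fun ⟨_, hk', h⟩ => h.mono hk')

lemma cancel {s : ℕ} (h : ModelCountBound N m n) (hs : m + s = n + 1) :
    2 ^ s ≤ N ∨ ∃ i < s, N + 2 ^ i = 2 ^ s := by
  have hpos : 0 < 2 ^ m := Nat.two_pow_pos m
  rw [ModelCountBound, ← hs, pow_add] at h
  rcases h with h | ⟨j, hmj, hjn, h⟩
  · left
    rw [mul_comm N] at h
    exact Nat.le_of_mul_le_mul_left h hpos
  · obtain ⟨i, rfl⟩ := Nat.exists_eq_add_of_le hmj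
    right
    refine ⟨i, by omega, Nat.eq_of_mul_eq_mul_left hpos ?_⟩
    rw [← h, pow_add]; ring

end ModelCountBound

lemma setTrue_mem_models {V S : Finset ℕ} {G : Finset (Finset ℤ)} {l : ℤ}
    (hS : S ∈ models V G) (hlV : l.natAbs ∈ V) (hl : ∀ C ∈ G, -l ∉ C) :
    setTrue S l ∈ models V G := by
  obtain ⟨hSV, hsat⟩ := mem_models.mp hS
  refine mem_models.mpr ⟨setTrue_subset hSV hlV, fun C hC => ?_⟩
  obtain ⟨x, hxC, hx⟩ := hsat C hC
  by_cases hxl : x.natAbs = l.natAbs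
  · obtain rfl | rfl := Int.natAbs_eq_natAbs_iff.mp hxl
    · exact ⟨x, hxC, litTrue_setTrue S x⟩
    · exact absurd hxC (hl C hC)
  · exact ⟨x, hxC, (litTrue_setTrue_iff hxl).mpr hx⟩

/-- Otherwise every model falsifies the occurring literal, yet setting it true keeps a model
when its complement does not occur. -/
lemma exists_lit_mem_and_litTrue {V : Finset ℕ} {G : Finset (Finset ℤ)} {v : ℕ} (hv0 : v ≠ 0)
    (hvV : v ∈ V) (hocc : ∃ C ∈ G, ∃ x ∈ C, x.natAbs = v) (hG : (models V G).Nonempty) :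
    ∃ l : ℤ, l.natAbs = v ∧ (∃ C ∈ G, l ∈ C) ∧ ∃ S ∈ models V G, LitTrue S l := by
  obtain ⟨C, hC, x, hxC, rfl⟩ := hocc
  obtain ⟨S, hS⟩ := hG
  by_cases hx : LitTrue S x
  · exact ⟨x, rfl, ⟨C, hC, hxC⟩, S, hS, hx⟩
  by_cases hnx : ∃ C' ∈ G, -x ∈ C'
  · have hx0 : x ≠ 0 := by rintro rfl; exact hv0 rfl
    exact ⟨-x, Int.natAbs_neg x, hnx, S, hS, (litTrue_neg hx0).mpr hx⟩
  · simp only [not_exists, not_and] at hnx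
    exact ⟨x, rfl, ⟨C, hC, hxC⟩, _, setTrue_mem_models hS hvV hnx, litTrue_setTrue S x⟩

lemma card_models_empty {G : Finset (Finset ℤ)} (hG : (models ∅ G).Nonempty) :
    #(models ∅ G) = 1 :=
  le_antisymm (card_le_card (filter_subset _ _)) hG.card_pos

/-- Split on a variable `v`. If `v` occurs in `G`, the branch of an occurring literal that holds
in some model loses a clause, which pays for the new variable; the other branch keeps at most
`#G` clauses. If `v` does not occur, both branches equal `G`. -/
theorem modelCountBound_card_models {V : Finset ℕ} (h0 : 0 ∉ V) {G : Finset (Finset ℤ)}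
    (hG : (models V G).Nonempty) : ModelCountBound #(models V G) #G #V := by
  induction V using Finset.induction_on generalizing G with
  | empty => simpa [card_models_empty hG] using ModelCountBound.one #G
  | insert v W hvW ih =>
    have hv0 : v ≠ 0 := fun h => h0 (h ▸ mem_insert_self v W)
    have ih' := @ih (fun h => h0 (mem_insert_of_mem h))
    rw [card_insert_of_notMem hvW]
    by_cases hocc : ∃ C ∈ G, ∃ x ∈ C, x.natAbs = v
    · obtain ⟨l, rfl, ⟨C, hC, hlC⟩, S, hS, hl⟩ :=
        exists_lit_mem_and_litTrue hv0 (mem_insert_self _ W) hocc hG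
      have hl0 : l ≠ 0 := by rintro rfl; exact hv0 rfl
      have hlV := mem_insert_self l.natAbs W
      have hpos : (models W (restrictLit G l)).Nonempty := by
        rw [← card_pos, ← erase_insert hvW, ← card_models_filter_litTrue hl0 hlV, card_pos]
        exact ⟨S, mem_filter.mpr ⟨hS, hl⟩⟩
      rw [card_models_eq_add hl0 hlV, erase_insert hvW]
      refine (ih' hpos).step (card_restrictLit_lt hC hlC) ?_
      rcases (models W (restrictLit G (-l))).eq_empty_or_nonempty with h | h
      · exact Or.inl (card_eq_zero.mpr h)
      · exact Or.inr ⟨_, card_restrictLit_le G (-l), ih' h⟩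
    · simp only [not_exists, not_and] at hocc
      have hv : (v : ℤ).natAbs ∈ insert v W := by simp
      have hsplit := card_models_eq_add (G := G) (Int.natCast_ne_zero.mpr hv0) hv
      rw [Int.natAbs_natCast, erase_insert hvW, restrictLit_eq_self (by simpa using hocc),
        restrictLit_eq_self (by simpa using hocc)] at hsplit
      rw [hsplit]
      exact (ih' (card_pos.mp (by have := hG.card_pos; omega))).double

lemma natAbs_mem_var {F : Finset (Finset ℤ)} {C : Finset ℤ} {x : ℤ} (hC : C ∈ F) (hx : x ∈ C) :
    x.natAbs ∈ var F :=
  mem_biUnion.mpr ⟨C, hC, mem_image_of_mem _ hx⟩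

lemma var_subset_var {F G : Finset (Finset ℤ)} (h : G ⊆ F) : var G ⊆ var F :=
  biUnion_subset_biUnion_of_subset_left _ h

lemma zero_notMem_var {F : Finset (Finset ℤ)} (hF : IsClauseSet F) : 0 ∉ var F := by
  intro h
  obtain ⟨C, hC, hx⟩ := mem_biUnion.mp h
  obtain ⟨x, hxC, hx0⟩ := mem_image.mp hx
  exact (hF C hC).1 (Int.natAbs_eq_zero.mp hx0 ▸ hxC)

lemma exists_forall_clauseTrue_of_satisfiable {G : Finset (Finset ℤ)} {V : Finset ℕ}
    (h : Satisfiable G) (hGV : var G ⊆ V) : ∃ S ⊆ V, ∀ C ∈ G, ClauseTrue S C := by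
  obtain ⟨K, hK, hKG⟩ := h
  refine ⟨V.filter (fun w => (w : ℤ) ∈ K), filter_subset _ _, fun C hC => ?_⟩
  obtain ⟨x, hx⟩ := hKG C hC
  obtain ⟨hxK, hxC⟩ := mem_inter.mp hx
  have hx0 : x ≠ 0 := fun h => hK.1 (h ▸ hxK)
  refine ⟨x, hxC, ?_⟩
  simp only [LitTrue, mem_filter, hGV (natAbs_mem_var hC hxC), true_and]
  rcases lt_or_gt_of_ne hx0 with hneg | hpos
  · rw [Int.ofNat_natAbs_of_nonpos hneg.le]
    exact iff_of_false hneg.not_gt (hK.2 x hxK)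
  · rw [Int.natAbs_of_nonneg hpos.le]
    exact iff_of_true hpos hxK

lemma satisfiable_of_forall_clauseTrue {G : Finset (Finset ℤ)} {V S : Finset ℕ} (h0 : 0 ∉ V)
    (hGV : var G ⊆ V) (h : ∀ C ∈ G, ClauseTrue S C) : Satisfiable G := by
  set K := (V.biUnion fun v : ℕ => ({(v : ℤ), -(v : ℤ)} : Finset ℤ)).filter (LitTrue S)
  have hK : ∀ x, x ∈ K ↔ x.natAbs ∈ V ∧ LitTrue S x := by
    intro x
    simp only [K, mem_filter, mem_biUnion, mem_insert, mem_singleton]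
    constructor
    · rintro ⟨⟨v, hv, rfl | rfl⟩, hx⟩ <;> simpa using ⟨hv, hx⟩
    · rintro ⟨hv, hx⟩
      exact ⟨⟨_, hv, Int.natAbs_eq x⟩, hx⟩
  refine ⟨K, ⟨fun hK0 => h0 ((hK 0).mp hK0).1, fun x hx hnx => ?_⟩, fun C hC => ?_⟩
  · have hx0 : x ≠ 0 := by rintro rfl; exact h0 ((hK 0).mp hx).1
    exact (litTrue_neg hx0).mp ((hK _).mp hnx).2 ((hK x).mp hx).2
  · obtain ⟨x, hxC, hx⟩ := h C hC
    exact ⟨x, mem_inter.mpr ⟨(hK x).mpr ⟨hGV (natAbs_mem_var hC hxC), hx⟩, hxC⟩⟩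

lemma satisfiable_iff_models_nonempty {F : Finset (Finset ℤ)} (hF : IsClauseSet F) :
    Satisfiable F ↔ (models (var F) F).Nonempty := by
  constructor
  · intro h
    obtain ⟨S, hS, hSF⟩ := exists_forall_clauseTrue_of_satisfiable h subset_rfl
    exact ⟨S, mem_models.mpr ⟨hS, hSF⟩⟩
  · rintro ⟨S, hS⟩
    exact satisfiable_of_forall_clauseTrue (zero_notMem_var hF) subset_rfl (mem_models.mp hS).2

lemma exists_not_clauseTrue {F : Finset (Finset ℤ)} (hF : IsClauseSet F) (hU : ¬ Satisfiable F)
    {S : Finset ℕ} (hS : S ⊆ var F) : ∃ D ∈ F, ¬ ClauseTrue S D := by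
  by_contra! h
  exact hU ((satisfiable_iff_models_nonempty hF).mpr ⟨S, mem_models.mpr ⟨hS, h⟩⟩)

def negVars (C : Finset ℤ) : Finset ℕ := (C.filter (· < 0)).image Int.natAbs

lemma natAbs_mem_negVars_iff {C : Finset ℤ} (hC : IsClause C) {x : ℤ} (hx : x ∈ C) :
    x.natAbs ∈ negVars C ↔ x < 0 := by
  simp only [negVars, mem_image, mem_filter]
  constructor
  · rintro ⟨y, ⟨hyC, hy⟩, hyx⟩
    obtain rfl | rfl := Int.natAbs_eq_natAbs_iff.mp hyx
    · exact hy
    · exact absurd hyC (hC.2 x hx)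
  · exact fun h => ⟨x, ⟨hx, h⟩, rfl⟩

lemma eq_negVars_of_not_clauseTrue {C : Finset ℤ} (hC : IsClause C) {S : Finset ℕ}
    (hS : S ⊆ clauseVar C) (h : ¬ ClauseTrue S C) : S = negVars C := by
  have key : ∀ x ∈ C, (x.natAbs ∈ S ↔ x.natAbs ∈ negVars C) := by
    intro x hx
    have hx0 : x ≠ 0 := fun h => hC.1 (h ▸ hx)
    have hfalse : ¬ LitTrue S x := fun hxt => h ⟨x, hx, hxt⟩
    rw [natAbs_mem_negVars_iff hC hx]
    unfold LitTrue at hfalse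
    by_cases hxS : x.natAbs ∈ S <;>
      simp only [hxS, iff_true, iff_false, true_iff, false_iff] at hfalse ⊢ <;> omega
  have hneg : negVars C ⊆ clauseVar C := image_subset_image (filter_subset _ _)
  ext w
  constructor
  · intro hw
    obtain ⟨x, hx, rfl⟩ := mem_image.mp (hS hw)
    exact (key x hx).mp hw
  · intro hw
    obtain ⟨x, hx, rfl⟩ := mem_image.mp (hneg hw)
    exact (key x hx).mpr hw

lemma not_clauseTrue_negVars {C : Finset ℤ} (hC : IsClause C) : ¬ ClauseTrue (negVars C) C := by
  rintro ⟨x, hx, hxt⟩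
  have hx0 : x ≠ 0 := fun h => hC.1 (h ▸ hx)
  unfold LitTrue at hxt
  rw [natAbs_mem_negVars_iff hC hx] at hxt
  omega

/-- Two clauses falsified by one assignment cannot contain complementary literals. -/
lemma subset_of_not_clauseTrue {C D : Finset ℤ} {S : Finset ℕ} (hCD : clauseVar C ⊆ clauseVar D)
    (hC : ¬ ClauseTrue S C) (hD : ¬ ClauseTrue S D) : C ⊆ D := by
  intro x hx
  obtain ⟨y, hy, hyx⟩ := mem_image.mp (hCD (mem_image_of_mem _ hx))
  obtain rfl | rfl := Int.natAbs_eq_natAbs_iff.mp hyx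
  · exact hy
  · rcases eq_or_ne x 0 with rfl | hx0
    · simpa using hy
    · exact absurd ((litTrue_neg hx0).mpr fun h => hC ⟨x, hx, h⟩) fun h => hD ⟨-x, hy, h⟩

def nonFullClauses (F : Finset (Finset ℤ)) : Finset (Finset ℤ) :=
  F.filter (fun C => clauseVar C ≠ var F)

lemma nfc_add_card_nonFullClauses (F : Finset (Finset ℤ)) : nfc F + #(nonFullClauses F) = #F :=
  card_filter_add_card_filter_not _

namespace MinUnsat

variable {F : Finset (Finset ℤ)}

/-- `F` minus the full clause `C` has a model over `var F`; it falsifies `C`, so it is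
`negVars C`. -/
lemma negVars_mem_models (hF : IsClauseSet F) (hMU : MinUnsat F) {C : Finset ℤ} (hC : C ∈ F)
    (hfull : clauseVar C = var F) : negVars C ∈ models (var F) (nonFullClauses F) := by
  obtain ⟨S, hSV, hS⟩ := exists_forall_clauseTrue_of_satisfiable (hMU.2 _ (erase_ssubset hC))
    (var_subset_var (erase_subset C F))
  obtain ⟨D, hD, hSD⟩ := exists_not_clauseTrue hF hMU.1 hSV
  obtain rfl : D = C := by
    by_contra hne
    exact hSD (hS D (mem_erase.mpr ⟨hne, hD⟩))
  rw [← eq_negVars_of_not_clauseTrue (hF D hD) (hfull ▸ hSV) hSD]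
  refine mem_models.mpr ⟨hSV, fun E hE => hS E (mem_erase.mpr ⟨?_, (mem_filter.mp hE).1⟩)⟩
  rintro rfl
  exact (mem_filter.mp hE).2 hfull

lemma card_models_nonFullClauses (hF : IsClauseSet F) (hMU : MinUnsat F) :
    #(models (var F) (nonFullClauses F)) = nfc F := by
  symm
  refine card_bij (fun C _ => negVars C) (fun C hC => ?_) (fun C₁ h₁ C₂ h₂ h => ?_)
    (fun S hS => ?_)
  · exact negVars_mem_models hF hMU (mem_filter.mp hC).1 (mem_filter.mp hC).2
  · obtain ⟨h₁F, h₁full⟩ := mem_filter.mp h₁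
    obtain ⟨h₂F, h₂full⟩ := mem_filter.mp h₂
    have n₁ := not_clauseTrue_negVars (hF _ h₁F)
    have n₂ := not_clauseTrue_negVars (hF _ h₂F)
    rw [← h] at n₂
    exact (subset_of_not_clauseTrue (h₁full.trans h₂full.symm).le n₁ n₂).antisymm
      (subset_of_not_clauseTrue (h₂full.trans h₁full.symm).le n₂ n₁)
  · obtain ⟨hSV, hS⟩ := mem_models.mp hS
    obtain ⟨D, hD, hSD⟩ := exists_not_clauseTrue hF hMU.1 hSV
    have hfull : clauseVar D = var F := by
      by_contra h
      exact hSD (hS D (mem_filter.mpr ⟨hD, h⟩))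
    exact ⟨D, mem_filter.mpr ⟨hD, hfull⟩,
      (eq_negVars_of_not_clauseTrue (hF D hD) (hfull ▸ hSV) hSD).symm⟩

lemma modelCountBound_nfc (hF : IsClauseSet F) (hMU : MinUnsat F) (hpos : 0 < nfc F) :
    ModelCountBound (nfc F) #(nonFullClauses F) (numVar F) := by
  rw [← card_models_nonFullClauses hF hMU] at hpos ⊢
  exact modelCountBound_card_models (zero_notMem_var hF) (card_pos.mp hpos)

end MinUnsat

lemma add_twelve_le_two_pow {t : ℕ} (ht : 4 ≤ t) : t + 12 ≤ 2 ^ t := by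
  obtain ⟨u, rfl⟩ := Nat.exists_eq_add_of_le ht
  have := @Nat.lt_two_pow_self u
  rw [pow_add]
  omega

/-- With `s = f - k + 1 ≥ 4`, a count `f` of the form `2^s` or more is too large, and one of the
form `2^s - 2^i` is too large unless `s = 4`, where `f = k + 3 ∉ {8, 12, 14, 15}`. -/
lemma le_of_modelCountBound {f m n k : ℕ} (hk : k = 8 ∨ k = 10) (hsum : f + m = n + k)
    (h : ModelCountBound f m n) : f ≤ k + 2 := by
  by_contra! hf
  obtain ⟨s, hs⟩ : ∃ s, s = f - k + 1 := ⟨_, rfl⟩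
  rcases h.cancel (s := s) (by omega) with h | ⟨i, his, h⟩
  · have := add_twelve_le_two_pow (t := s) (by omega)
    omega
  · rcases (show s = 4 ∨ 5 ≤ s by omega) with rfl | hs5
    · interval_cases i <;> omega
    · have h1 := Nat.pow_le_pow_right two_pos (Nat.le_sub_one_of_lt his)
      have h2 : 2 ^ s = 2 * 2 ^ (s - 1) := by rw [← pow_succ']; congr 1; omega
      have := add_twelve_le_two_pow (t := s - 1) (by omega)
      omega

theorem MinUnsat.nfc_le {F : Finset (Finset ℤ)} {k : ℕ} (hF : IsClauseSet F) (hMU : MinUnsat F)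
    (hk : k = 8 ∨ k = 10) (hdef : deficiency F = k) : nfc F ≤ k + 2 := by
  rcases (nfc F).eq_zero_or_pos with h | hpos
  · omega
  refine le_of_modelCountBound hk ?_ (hMU.modelCountBound_nfc hF hpos)
  have := nfc_add_card_nonFullClauses F
  unfold deficiency at hdef
  omega

lemma not_satisfiable_of_models_eq_empty {F : Finset (Finset ℤ)} (hF : IsClauseSet F)
    (h : models (var F) F = ∅) : ¬ Satisfiable F := by
  rw [satisfiable_iff_models_nonempty hF, h]
  exact not_nonempty_empty

/-- The clauses are disjoint subcubes covering `{0,1}^4`: ten points and two larger subcubes. -/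
def F8 : Finset (Finset ℤ) :=
  { {1,2,3,4}, {1,2,3,-4}, {1,2,-3,4}, {1,2,-3,-4},
    {1,-2,3,4}, {1,-2,3,-4}, {1,-2,-3,4}, {1,-2,-3,-4},
    {-1,2,3,4}, {-1,2,3,-4}, {-1,-2}, {-1,2,-3} }

def F10 : Finset (Finset ℤ) :=
  { {1,2,3,4}, {1,2,3,-4}, {1,2,-3,4}, {1,2,-3,-4},
    {1,-2,3,4}, {1,-2,3,-4}, {1,-2,-3,4}, {1,-2,-3,-4},
    {-1,2,3,4}, {-1,2,3,-4}, {-1,2,-3,4}, {-1,2,-3,-4},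
    {-1,-2,-3}, {-1,-2,3} }

theorem stmt_19 :
    ((∀ F : Finset (Finset ℤ), IsClauseSet F → MinUnsat F → deficiency F = 8 → nfc F ≤ 10) ∧
     (∃ F : Finset (Finset ℤ), IsClauseSet F ∧ ¬ Satisfiable F ∧ Hitting F ∧
        deficiency F = 8 ∧ nfc F = 10)) ∧
    ((∀ F : Finset (Finset ℤ), IsClauseSet F → MinUnsat F → deficiency F = 10 → nfc F ≤ 12) ∧
     (∃ F : Finset (Finset ℤ), IsClauseSet F ∧ ¬ Satisfiable F ∧ Hitting F ∧
        deficiency F = 10 ∧ nfc F = 12)) := by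
  have hF8 : IsClauseSet F8 := by unfold IsClauseSet IsClause; decide
  have hF10 : IsClauseSet F10 := by unfold IsClauseSet IsClause; decide
  refine ⟨⟨fun F hF hMU hdef => hMU.nfc_le (k := 8) hF (Or.inl rfl) (by exact_mod_cast hdef),
      F8, hF8, not_satisfiable_of_models_eq_empty hF8 (by decide), ?_, by decide, by decide⟩,
    ⟨fun F hF hMU hdef => hMU.nfc_le (k := 10) hF (Or.inr rfl) (by exact_mod_cast hdef),
      F10, hF10, not_satisfiable_of_models_eq_empty hF10 (by decide), ?_, by decide, by decide⟩⟩
  all_goals unfold Hitting; decide
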